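/- arXiv:1711.09371 — 8 statements merged into one kernel-verified Lean document; each statement's English description precedes it below -/
import Mathlib

section
/- Let G be a group, φ an automorphism of G, and H a normal subgroup of G with φ(H) = H; let φ̄ be the induced automorphism of G/H and let C(φ̄) = {x ∈ G/H : φ̄(x) = x} be its fixed-point subgroup. Then R(φ|_H) ≤ R(φ) · |C(φ̄)| (as an inequality of cardinal numbers; in particular, if R(φ) is finite and C(φ̄) is finite, then R(φ|_H) is finite). -/
/-!
Send each `φ|_H`-class to the `φ`-class containing it. If `b ∈ H`, every element of `H` that is
`φ`-twisted conjugate to `b` has the form `g * b * (φ g)⁻¹`, and such an element lies in `H`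
exactly when the coset `gH` is fixed by `ψ`; moreover its `φ|_H`-class depends only on `gH`.
Hence each fibre of the map is the image of `C(ψ)`, and `R(φ|_H) ≤ R(φ) · |C(ψ)|`.
-/

/-- Twisted conjugacy relation for an automorphism `φ` of `G`:
`x ∼ y` iff `y = h * x * φ(h)⁻¹` for some `h`. -/
def twistedConj {G : Type*} [Group G] (φ : G ≃* G) (x y : G) : Prop :=
  ∃ h : G, y = h * x * (φ h)⁻¹

/-- The set of Reidemeister (twisted conjugacy) classes of `φ`.
Its cardinality is the Reidemeister number `R(φ)`. -/
def ReidemeisterClasses {G : Type*} [Group G] (φ : G ≃* G) := Quot (twistedConj φ)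

section Restriction

variable {G : Type*} [Group G] (φ : G ≃* G) (H : Subgroup G)

theorem twistedConj_equivalence : Equivalence (twistedConj φ) where
  refl x := ⟨1, by simp⟩
  symm := by rintro x y ⟨h, rfl⟩; exact ⟨h⁻¹, by simp [mul_assoc]⟩
  trans := by rintro x y z ⟨h, rfl⟩ ⟨k, rfl⟩; exact ⟨k * h, by simp [mul_assoc]⟩

def restrictedTwistedConj (x y : H) : Prop :=
  ∃ h : H, (y : G) = h * x * (φ h)⁻¹

def restrictedClassesToClasses :
    Quot (restrictedTwistedConj φ H) → ReidemeisterClasses φ :=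
  Quot.map Subtype.val fun _ _ ⟨h, e⟩ => ⟨h, e⟩

variable {φ H} [H.Normal]

theorem mul_mul_inv_map_mem_iff {b : G} (hb : b ∈ H) (g : G) :
    g * b * (φ g)⁻¹ ∈ H ↔ ((φ g : G ⧸ H) = g) := by
  have hconj : g * b * g⁻¹ ∈ H := Subgroup.Normal.conj_mem ‹_› b hb g
  rw [show g * b * (φ g)⁻¹ = g * b * g⁻¹ * (g * (φ g)⁻¹) by group,
    Subgroup.mul_mem_cancel_left H hconj, QuotientGroup.eq]
  exact Subgroup.Normal.mem_comm_iff ‹_›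

theorem restrictedTwistedConj_of_coset_eq {b : G} {g₁ g₂ : G} (hg : (g₁ : G ⧸ H) = g₂)
    (h₁ : g₁ * b * (φ g₁)⁻¹ ∈ H) (h₂ : g₂ * b * (φ g₂)⁻¹ ∈ H) :
    restrictedTwistedConj φ H ⟨_, h₁⟩ ⟨_, h₂⟩ := by
  rw [QuotientGroup.eq] at hg
  refine ⟨⟨g₂ * g₁⁻¹, ?_⟩, ?_⟩
  · simpa [mul_assoc] using Subgroup.Normal.conj_mem ‹_› _ hg g₁
  · simp only [map_mul, map_inv]
    group

theorem mk_preimage_restrictedClassesToClasses_le (ψ : (G ⧸ H) ≃* (G ⧸ H))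
    (hψ : ∀ g : G, ψ g = φ g) (b : H) :
    Cardinal.mk (restrictedClassesToClasses φ H ⁻¹'
        {(Quot.mk _ (b : G) : ReidemeisterClasses φ)}) ≤
      Cardinal.mk {x : G ⧸ H // ψ x = x} := by
  let F : {x : G ⧸ H // ψ x = x} → Quot (restrictedTwistedConj φ H) := fun x =>
    Quot.mk _ ⟨x.1.out * b * (φ x.1.out)⁻¹, (mul_mul_inv_map_mem_iff b.2 _).2 <| by
      rw [← hψ, QuotientGroup.out_eq', x.2]⟩
  refine (Cardinal.mk_le_mk_of_subset (t := Set.range F) ?_).trans Cardinal.mk_range_le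
  rintro ⟨a⟩ ha
  obtain ⟨g, hg⟩ := (twistedConj_equivalence φ).eqvGen_iff.mp (Quot.eq.mp (Eq.symm ha))
  have hmem : g * b * (φ g)⁻¹ ∈ H := hg ▸ a.2
  refine ⟨⟨g, by rw [hψ, (mul_mul_inv_map_mem_iff b.2 g).1 hmem]⟩, ?_⟩
  rw [show a = ⟨_, hmem⟩ from Subtype.ext hg]
  exact Quot.sound (restrictedTwistedConj_of_coset_eq (QuotientGroup.out_eq' _) _ _)

end Restriction

theorem stmt1_general {G : Type*} [Group G] (φ : G ≃* G) (H : Subgroup G) [H.Normal]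
    (ψ : (G ⧸ H) ≃* (G ⧸ H))
    (hψ : ∀ g : G, ψ (QuotientGroup.mk g) = QuotientGroup.mk (φ g)) :
    Cardinal.mk (Quot (fun h₁ h₂ : H => ∃ h : H, (h₂ : G) = ↑h * ↑h₁ * (φ ↑h)⁻¹))
      ≤ Cardinal.mk (ReidemeisterClasses φ) * Cardinal.mk {x : G ⧸ H // ψ x = x} := by
  change Cardinal.mk (Quot (restrictedTwistedConj φ H)) ≤ _
  refine Cardinal.mk_le_mk_mul_of_mk_preimage_le (restrictedClassesToClasses φ H) fun c => ?_
  obtain hempty | ⟨⟨b⟩, hb⟩ :=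
    (restrictedClassesToClasses φ H ⁻¹' {c}).eq_empty_or_nonempty
  · simp [hempty]
  · rw [← hb]
    exact mk_preimage_restrictedClassesToClasses_le ψ hψ b

/-- If `H` is a `φ`-invariant normal subgroup of `G` and `ψ` is the induced automorphism of
`G ⧸ H` with fixed-point subgroup `C(ψ)`, then `R(φ|_H) ≤ R(φ) · |C(ψ)|` as cardinals. -/
theorem stmt1 {G : Type*} [Group G] (φ : G ≃* G) (H : Subgroup G) [H.Normal]
    (hH : ∀ x : G, x ∈ H ↔ φ x ∈ H)
    (ψ : (G ⧸ H) ≃* (G ⧸ H))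
    (hψ : ∀ g : G, ψ (QuotientGroup.mk g) = QuotientGroup.mk (φ g)) :
    Cardinal.mk (Quot (fun h₁ h₂ : H => ∃ h : H, (h₂ : G) = ↑h * ↑h₁ * (φ ↑h)⁻¹))
      ≤ Cardinal.mk (ReidemeisterClasses φ) * Cardinal.mk {x : G ⧸ H // ψ x = x} :=
  stmt1_general φ H ψ hψ
end

section
/- Let G be a finitely generated residually finite group and φ an automorphism of G with finite Reidemeister number R(φ) < ∞. Then the fixed-point subgroup C(φ) = {g ∈ G : φ(g) = g} is finite. -/
/-- A group is residually finite if every nontrivial element survives in some finite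
quotient, i.e. avoids some finite-index normal subgroup (the kernel of a homomorphism to
a finite group). -/
def ResiduallyFinite (G : Type*) [Group G] : Prop :=
  ∀ g : G, g ≠ 1 → ∃ N : Subgroup G, N.Normal ∧ Finite (G ⧸ N) ∧ g ∉ N

/-!
In a finite group `H` with automorphism `ψ`, let `H` act on itself by `ψ`-twisted conjugation
`h • x = h * x * (ψ h)⁻¹`. Its orbits are the Reidemeister classes and the stabilizer of `1` is
the fixed subgroup `C(ψ)`, so the class equation reads `∑ 1 / |Stab(ω)| = 1` over the `R(ψ)`
orbits. As in Landau's theorem on class numbers, a sum of `k` unit fractions equal to `1` has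
denominators bounded in terms of `k` alone, hence `|C(ψ)| ≤ B(R(ψ)) := landauBound R(ψ) 1`.

For `G` finitely generated and residually finite, any `B(R(φ)) + 1` fixed points of `φ` stay
distinct modulo some characteristic subgroup `M` of finite index (the intersection of the kernels
of the finitely many homomorphisms to a finite quotient). The automorphism `ψ` induced on `G ⧸ M`
has `R(ψ) ≤ R(φ)` yet more than `B(R(φ))` fixed points, a contradiction.
-/

/-- Of `k` unit fractions summing to `q` with `q.den ≤ b`, the largest is `1 / d` with
`d ≤ k * b`, and removing it leaves a sum whose denominator is at most `b * (k * b)`. -/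
def landauBound : ℕ → ℕ → ℕ
  | 0, _ => 0
  | k + 1, b => max ((k + 1) * b) (landauBound k ((k + 1) * b * b))

theorem Rat.inv_le_den {q : ℚ} (hq : 0 < q) : q⁻¹ ≤ q.den := by
  have hnum : (1 : ℚ) ≤ q.num := by exact_mod_cast Rat.num_pos.2 hq
  have hden : (0 : ℚ) < q.den := by exact_mod_cast q.pos
  calc q⁻¹ = q.den / q.num := by rw [← Rat.num_div_den q, inv_div, Rat.num_div_den]
    _ ≤ q.den := div_le_self hden.le hnum

section UnitFractions

variable {ι : Type*}

theorem Finset.exists_le_card_mul_den_of_sum_inv_eq {s : Finset ι} {d : ι → ℕ} {q : ℚ}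
    (hq : 0 < q) (hsum : ∑ i ∈ s, (d i : ℚ)⁻¹ = q) :
    ∃ i ∈ s, 0 < d i ∧ d i ≤ s.card * q.den := by
  have hs : s.Nonempty := by
    rw [Finset.nonempty_iff_ne_empty]
    rintro rfl
    simp [← hsum] at hq
  have hcard : (0 : ℚ) < s.card := by exact_mod_cast hs.card_pos
  obtain ⟨i, hi, hle⟩ : ∃ i ∈ s, q / s.card ≤ (d i : ℚ)⁻¹ := by
    refine Finset.exists_le_of_sum_le hs ?_
    rw [Finset.sum_const, nsmul_eq_mul, mul_div_cancel₀ _ hcard.ne', hsum]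
  have hdi : (0 : ℚ) < (d i : ℚ)⁻¹ := lt_of_lt_of_le (by positivity) hle
  refine ⟨i, hi, by exact_mod_cast inv_pos.1 hdi, ?_⟩
  have : (d i : ℚ) ≤ s.card * q.den :=
    calc (d i : ℚ) = ((d i : ℚ)⁻¹)⁻¹ := (inv_inv _).symm
      _ ≤ (q / s.card)⁻¹ := inv_anti₀ (by positivity) hle
      _ = s.card * q⁻¹ := by rw [inv_div, div_eq_mul_inv]
      _ ≤ s.card * q.den := by gcongr; exact Rat.inv_le_den hq
  exact_mod_cast this

theorem le_landauBound [DecidableEq ι] {k b : ℕ} {s : Finset ι} {d : ι → ℕ} {q : ℚ}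
    (hs : s.card ≤ k) (hqb : q.den ≤ b) (hsum : ∑ i ∈ s, (d i : ℚ)⁻¹ = q) :
    ∀ i ∈ s, d i ≤ landauBound k b := by
  induction k generalizing b s q with
  | zero => simp_all
  | succ k ih =>
    intro i hi
    rcases Nat.eq_zero_or_pos (d i) with hdi | hdi
    · simp [hdi]
    have hq : 0 < q := hsum ▸ lt_of_lt_of_le (by positivity)
      (Finset.single_le_sum (fun j _ => by positivity) hi)
    obtain ⟨i₀, hi₀, hd₀, hd₀le⟩ := Finset.exists_le_card_mul_den_of_sum_inv_eq hq hsum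
    have hd₀le' : d i₀ ≤ (k + 1) * b := hd₀le.trans (Nat.mul_le_mul hs hqb)
    by_cases hsmall : d i ≤ (k + 1) * b
    · exact hsmall.trans (le_max_left _ _)
    have hi' : i ∈ s.erase i₀ := Finset.mem_erase.2 ⟨by rintro rfl; exact hsmall hd₀le', hi⟩
    refine (ih (s := s.erase i₀) (q := q - (d i₀ : ℚ)⁻¹) ?_ ?_ ?_ i hi').trans (le_max_right _ _)
    · rw [Finset.card_erase_of_mem hi₀]
      omega
    · calc (q - (d i₀ : ℚ)⁻¹).den ≤ q.den * d i₀ := by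
            refine Nat.le_of_dvd (by positivity) ?_
            simpa [Rat.inv_natCast_den_of_pos hd₀] using Rat.sub_den_dvd q (d i₀ : ℚ)⁻¹
        _ ≤ b * ((k + 1) * b) := Nat.mul_le_mul hqb hd₀le'
        _ = (k + 1) * b * b := by ring
    · rw [Finset.sum_erase_eq_sub hi₀, hsum]

end UnitFractions

namespace MulAction

variable (α β : Type*) [Group α] [MulAction α β]

theorem sum_inv_card_stabilizer_out [Finite α] [Finite β] [Fintype (orbitRel.Quotient α β)] :
    ∑ ω : orbitRel.Quotient α β, (Nat.card (stabilizer α ω.out) : ℚ)⁻¹ =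
      Nat.card β / Nat.card α := by
  have horbit (ω : orbitRel.Quotient α β) :
      (Nat.card (stabilizer α ω.out) : ℚ)⁻¹ = Nat.card (orbit α ω.out) / Nat.card α := by
    have h := Subgroup.card_mul_index (stabilizer α ω.out)
    rw [index_stabilizer, ← Nat.card_coe_set_eq] at h
    have : Nonempty (orbit α ω.out) := ⟨⟨_, mem_orbit_self _⟩⟩
    have hstab : (Nat.card (stabilizer α ω.out) : ℚ) ≠ 0 := by exact_mod_cast Nat.card_pos.ne'
    have horb : (Nat.card (orbit α ω.out) : ℚ) ≠ 0 := by exact_mod_cast Nat.card_pos.ne'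
    rw [← h]
    push_cast
    field_simp
  have hsum : ∑ ω : orbitRel.Quotient α β, Nat.card (orbit α ω.out) = Nat.card β := by
    rw [← Nat.card_sigma, Nat.card_congr (selfEquivSigmaOrbits α β)]
  simp_rw [horbit, ← Finset.sum_div]
  exact_mod_cast congrArg (fun n : ℕ => (n : ℚ) / Nat.card α) hsum

variable {α β}

theorem card_stabilizer_le_landauBound [Finite α] [Finite β] (hcard : Nat.card β = Nat.card α)
    {k : ℕ} (hk : Nat.card (orbitRel.Quotient α β) ≤ k) (b : β) :
    Nat.card (stabilizer α b) ≤ landauBound k 1 := by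
  classical
  have : Fintype (orbitRel.Quotient α β) := Fintype.ofFinite _
  have hrel : orbitRel α β (Quotient.mk (orbitRel α β) b).out b :=
    Quotient.exact (Quotient.out_eq _)
  rw [← Nat.card_congr (stabilizerEquivStabilizerOfOrbitRel hrel).toEquiv]
  have hbound : ∀ ω ∈ (Finset.univ : Finset (orbitRel.Quotient α β)),
      Nat.card (stabilizer α ω.out) ≤ landauBound k 1 := by
    refine le_landauBound (q := 1) ?_ Rat.den_one.le ?_
    · rwa [Finset.card_univ, ← Nat.card_eq_fintype_card]
    · rw [sum_inv_card_stabilizer_out, hcard, div_self]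
      exact_mod_cast Nat.card_pos.ne'
  exact hbound _ (Finset.mem_univ _)

end MulAction

/-- A copy of `G` on which `G` acts by `φ`-twisted conjugation. -/
def TwistedConjugation {G : Type*} [Group G] (_φ : G ≃* G) : Type _ := G

namespace TwistedConjugation

variable {G : Type*} [Group G] (φ : G ≃* G)

def mk : G ≃ TwistedConjugation φ := Equiv.refl G

instance : MulAction G (TwistedConjugation φ) where
  smul h x := mk φ (h * (mk φ).symm x * (φ h)⁻¹)
  one_smul x := by
    show mk φ (1 * (mk φ).symm x * (φ 1)⁻¹) = x
    simp
  mul_smul g h x := by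
    show mk φ _ = mk φ (g * (mk φ).symm (mk φ (h * (mk φ).symm x * (φ h)⁻¹)) * (φ g)⁻¹)
    simp only [map_mul, mul_inv_rev, Equiv.symm_apply_apply, mul_assoc]

theorem smul_mk (h x : G) : h • mk φ x = mk φ (h * x * (φ h)⁻¹) := rfl

instance [Finite G] : Finite (TwistedConjugation φ) := inferInstanceAs (Finite G)

theorem orbitRel_mk_iff (x y : G) :
    MulAction.orbitRel G (TwistedConjugation φ) (mk φ y) (mk φ x) ↔ twistedConj φ x y := by
  rw [MulAction.orbitRel_apply, MulAction.mem_orbit_iff, twistedConj]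
  simp only [smul_mk, (mk φ).injective.eq_iff, eq_comm]

def reidemeisterClassesEquivOrbits :
    ReidemeisterClasses φ ≃ MulAction.orbitRel.Quotient G (TwistedConjugation φ) :=
  Quot.congr (mk φ) fun x y => ((Setoid.comm' _).trans (orbitRel_mk_iff φ x y)).symm

theorem mem_stabilizer_mk_one_iff (g : G) :
    g ∈ MulAction.stabilizer G (mk φ 1) ↔ φ g = g := by
  rw [MulAction.mem_stabilizer_iff, smul_mk, (mk φ).injective.eq_iff, mul_one, mul_inv_eq_one,
    eq_comm]

end TwistedConjugation

open TwistedConjugation in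
theorem card_fixedPoints_le_landauBound {G : Type*} [Group G] [Finite G] (φ : G ≃* G) {k : ℕ}
    (hk : Nat.card (ReidemeisterClasses φ) ≤ k) :
    Nat.card {g : G // φ g = g} ≤ landauBound k 1 := by
  rw [← Nat.card_congr (Equiv.subtypeEquivRight (mem_stabilizer_mk_one_iff φ))]
  refine MulAction.card_stabilizer_le_landauBound (Nat.card_congr (mk φ).symm) ?_ _
  rwa [← Nat.card_congr (reidemeisterClassesEquivOrbits φ)]

namespace ReidemeisterClasses

variable {G Q : Type*} [Group G] [Group Q] {φ : G ≃* G} {ψ : Q ≃* Q}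

def map (π : G →* Q) (hπ : ∀ g, π (φ g) = ψ (π g)) :
    ReidemeisterClasses φ → ReidemeisterClasses ψ :=
  Quot.map π fun _ _ ⟨h, hy⟩ => ⟨π h, by rw [hy, map_mul, map_mul, map_inv, hπ]⟩

theorem map_surjective {π : G →* Q} (hπ : ∀ g, π (φ g) = ψ (π g))
    (hsurj : Function.Surjective π) : Function.Surjective (map π hπ) :=
  Function.Surjective.of_comp (g := Quot.mk _) (Quot.mk_surjective.comp hsurj)

end ReidemeisterClasses

theorem MonoidHom.finite_of_fg {G M : Type*} [Group G] [Group.FG G] [Monoid M] [Finite M] :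
    Finite (G →* M) := by
  obtain ⟨S, hS, hSfin⟩ := Group.fg_iff.1 ‹_›
  have : Finite S := hSfin
  refine Finite.of_injective (fun f : G →* M => fun s : S => f s) fun f g hfg => ?_
  exact MonoidHom.eq_of_eqOn_dense hS fun x hx => congrFun hfg ⟨x, hx⟩

theorem Subgroup.exists_characteristic_finiteIndex_le {G : Type*} [Group G] [Group.FG G]
    (N : Subgroup G) [N.Normal] [N.FiniteIndex] :
    ∃ M : Subgroup G, M.Characteristic ∧ M.FiniteIndex ∧ M ≤ N := by
  have : Finite (G →* G ⧸ N) := MonoidHom.finite_of_fg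
  refine ⟨⨅ f : G →* G ⧸ N, f.ker, ?_, finiteIndex_iInf fun f => finiteIndex_ker f, ?_⟩
  · refine characteristic_iff_le_comap.2 fun ϕ x hx => ?_
    simp only [mem_comap, mem_iInf, MonoidHom.mem_ker] at hx ⊢
    exact fun f => hx (f.comp ϕ.toMonoidHom)
  · exact (iInf_le _ (QuotientGroup.mk' N)).trans_eq (QuotientGroup.ker_mk' N)

namespace ResiduallyFinite

variable {G : Type*} [Group G]

theorem exists_normal_finiteIndex_injOn (hrf : ResiduallyFinite G) {S : Set G}
    (hS : S.Finite) :
    ∃ N : Subgroup G, N.Normal ∧ N.FiniteIndex ∧ S.InjOn (QuotientGroup.mk : G → G ⧸ N) := by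
  have hsep (t : G) : ∃ N : Subgroup G, N.Normal ∧ N.FiniteIndex ∧ (t ≠ 1 → t ∉ N) := by
    by_cases ht : t = 1
    · exact ⟨⊤, inferInstance, inferInstance, fun h => (h ht).elim⟩
    · obtain ⟨N, hN, hfin, htN⟩ := hrf t ht
      exact ⟨N, hN, Subgroup.finiteIndex_of_finite_quotient, fun _ => htN⟩
  choose N hN hfin htN using hsep
  have := hS.to_subtype
  refine ⟨⨅ p : S × S, N ((p.1 : G)⁻¹ * p.2), Subgroup.normal_iInf_normal fun _ => hN _,
    Subgroup.finiteIndex_iInf fun _ => hfin _, fun x hx y hy hxy => ?_⟩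
  rw [QuotientGroup.eq, Subgroup.mem_iInf] at hxy
  by_contra hne
  exact htN _ (fun h => hne (inv_mul_eq_one.1 h)) (hxy (⟨x, hx⟩, ⟨y, hy⟩))

theorem exists_characteristic_finiteIndex_injOn [Group.FG G] (hrf : ResiduallyFinite G)
    {S : Set G} (hS : S.Finite) :
    ∃ M : Subgroup G, M.Characteristic ∧ M.FiniteIndex ∧
      S.InjOn (QuotientGroup.mk : G → G ⧸ M) := by
  obtain ⟨N, hN, hNfin, hinj⟩ := hrf.exists_normal_finiteIndex_injOn hS
  obtain ⟨M, hM, hMfin, hMN⟩ := N.exists_characteristic_finiteIndex_le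
  exact ⟨M, hM, hMfin, fun x hx y hy hxy =>
    hinj hx hy (QuotientGroup.eq.2 (hMN (QuotientGroup.eq.1 hxy)))⟩

end ResiduallyFinite

/-- If `G` is finitely generated and residually finite and `R(φ) < ∞`, then the
fixed-point subgroup `C(φ) = {g : φ g = g}` is finite. -/
theorem stmt4 {G : Type*} [Group G] (hfg : Group.FG G) (hrf : ResiduallyFinite G)
    (φ : G ≃* G) (hR : Finite (ReidemeisterClasses φ)) :
    Finite {g : G // φ g = g} := by
  by_contra hinf
  set B := landauBound (Nat.card (ReidemeisterClasses φ)) 1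
  obtain ⟨S, hSfix, hSfin, hScard⟩ :=
    (Set.infinite_coe_iff.1 (not_finite_iff_infinite.1 hinf)).exists_subset_ncard_eq (B + 1)
  obtain ⟨M, hM, hMfin, hinj⟩ := hrf.exists_characteristic_finiteIndex_injOn hSfin
  let ψ : G ⧸ M ≃* G ⧸ M :=
    QuotientGroup.congr M M φ (Subgroup.characteristic_iff_map_eq.1 hM φ)
  have hψ (g : G) : QuotientGroup.mk' M (φ g) = ψ (QuotientGroup.mk' M g) :=
    (QuotientGroup.congr_mk _ _ _ _ g).symm
  have hRψ : Nat.card (ReidemeisterClasses ψ) ≤ Nat.card (ReidemeisterClasses φ) :=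
    Nat.card_le_card_of_surjective _
      (ReidemeisterClasses.map_surjective hψ (QuotientGroup.mk'_surjective M))
  have hfew := card_fixedPoints_le_landauBound ψ hRψ
  have hmany : B + 1 ≤ Nat.card {q : G ⧸ M // ψ q = q} := by
    rw [← hScard]
    refine Set.ncard_le_ncard_of_injOn (t := {q | ψ q = q}) _ (fun g hg => ?_) hinj
    show ψ (QuotientGroup.mk' M g) = QuotientGroup.mk' M g
    rw [← hψ, hSfix hg]
  omega
end

section
/- Let k ≥ 1, let T be a finite nonempty subset of ℤ^k, let t ≥ 1, and let s₁, …, s_t be pairwise distinct elements of ℤ^k. If the set of points of ℤ^k that are covered by an odd number of the translates T + s₁, …, T + s_t is a singleton, then t = 1 and T is a singleton. (Equivalently, in the group ⨁_{x ∈ ℤ^k} ℤ/2ℤ of finitely supported functions ℤ^k → ℤ/2ℤ, a sum of indicator functions of pairwise distinct translates of a finite nonempty set T can equal a single delta function δ_z only when t = 1 and |T| = 1.) -/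
/-!
Order `ℤ^k` lexicographically, which makes it a linearly ordered abelian group. In such a group,
`max T + max s` lies in exactly one translate `T + s i`, so it is the unique oddly covered point
`z`; so is `min T + min s`. Since `min T ≤ max T` and `min s ≤ max s`, the equality
`max T + max s = min T + min s` forces both `T` and the set of shifts to be singletons.
-/

open Finset Function

section
variable {G ι : Type*} [AddCommGroup G] [LinearOrder G] [IsOrderedAddMonoid G] [DecidableEq G]
  [Fintype ι] {T : Finset G} {s : ι → G}

lemma card_filter_sub_mem_eq_one_of_isGreatest (hs : Injective s) {a : G}
    (ha : IsGreatest (T : Set G) a) {j : ι} (hj : ∀ i, s i ≤ s j) :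
    #{i | a + s j - s i ∈ T} = 1 := by
  rw [card_eq_one]
  refine ⟨j, eq_singleton_iff_unique_mem.mpr ⟨by simpa using ha.1, fun i hi => ?_⟩⟩
  have hle : a + s j - s i ≤ a := ha.2 (mem_filter.mp hi).2
  exact hs ((hj i).antisymm (by simpa [sub_le_iff_le_add, add_comm] using hle))

lemma card_filter_sub_mem_eq_one_of_isLeast (hs : Injective s) {a : G}
    (ha : IsLeast (T : Set G) a) {j : ι} (hj : ∀ i, s j ≤ s i) :
    #{i | a + s j - s i ∈ T} = 1 :=
  card_filter_sub_mem_eq_one_of_isGreatest (G := Gᵒᵈ) (T := T) hs ha.dual hj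

theorem card_eq_one_and_card_eq_one_of_odd_cover (hs : Injective s) {z : G}
    (hodd : ∀ x, Odd #{i | x - s i ∈ T} ↔ x = z) :
    Fintype.card ι = 1 ∧ #T = 1 := by
  obtain ⟨i, hi⟩ : ({i | z - s i ∈ T} : Finset ι).Nonempty :=
    card_pos.mp ((hodd z).mpr rfl).pos
  have hT : T.Nonempty := ⟨_, (mem_filter.mp hi).2⟩
  have : Nonempty ι := ⟨i⟩
  obtain ⟨jmax, hjmax⟩ := Finite.exists_max s
  obtain ⟨jmin, hjmin⟩ := Finite.exists_min s
  have hmax : T.max' hT + s jmax = z := by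
    rw [← hodd, card_filter_sub_mem_eq_one_of_isGreatest hs (isGreatest_max' T hT) hjmax]
    exact odd_one
  have hmin : T.min' hT + s jmin = z := by
    rw [← hodd, card_filter_sub_mem_eq_one_of_isLeast hs (isLeast_min' T hT) hjmin]
    exact odd_one
  obtain ⟨hT_eq, hs_eq⟩ := (add_eq_add_iff_eq_and_eq (min'_le_max' T hT) (hjmin jmax)).mp
    (hmin.trans hmax.symm)
  constructor
  · exact Fintype.card_eq_one_iff.mpr
      ⟨jmax, fun i => hs ((hjmax i).antisymm (hs_eq ▸ hjmin i))⟩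
  · exact card_eq_one.mpr ⟨_, eq_singleton_iff_unique_mem.mpr ⟨max'_mem T hT,
      fun x hx => (le_max' T x hx).antisymm (hT_eq ▸ min'_le T x hx)⟩⟩

end

theorem stmt6_general (k : ℕ) (T : Finset (Fin k → ℤ))
    (t : ℕ) (s : Fin t → (Fin k → ℤ)) (hs : Function.Injective s)
    (z : Fin k → ℤ)
    (hodd : ∀ x : Fin k → ℤ,
      (Odd (Finset.univ.filter fun i : Fin t => x - s i ∈ T).card ↔ x = z)) :
    t = 1 ∧ T.card = 1 := by
  obtain ⟨ht, hT⟩ := card_eq_one_and_card_eq_one_of_odd_cover (G := Lex (Fin k → ℤ)) hs hodd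
  exact ⟨by simpa using ht, hT⟩

/-- If the points of `ℤ^k` covered by an odd number of the pairwise distinct translates
`T + s 0, …, T + s (t-1)` of a finite nonempty set `T` form a singleton, then `t = 1`
and `T` is a singleton. -/
theorem stmt6 (k : ℕ) (hk : 1 ≤ k) (T : Finset (Fin k → ℤ)) (hT : T.Nonempty)
    (t : ℕ) (ht : 1 ≤ t) (s : Fin t → (Fin k → ℤ)) (hs : Function.Injective s)
    (z : Fin k → ℤ)
    (hodd : ∀ x : Fin k → ℤ,
      (Odd (Finset.univ.filter fun i : Fin t => x - s i ∈ T).card ↔ x = z)) :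
    t = 1 ∧ T.card = 1 :=
  stmt6_general k T t s hs z hodd
end

section
/- Let Γ = ℤ_2 wr ℤ^k (k ≥ 1) and let φ be an automorphism of Γ, with restriction φ' to Σ. Then φ' permutes the generators δ_x: there is a bijection σ : ℤ^k → ℤ^k such that φ'(δ_x) = δ_{σ(x)} for every x ∈ ℤ^k. In particular, there is a unique x₀ ∈ ℤ^k with φ'(δ_0) = δ_{x₀}, and then φ'(δ_y) = δ_{φ̄(y) + x₀} for all y ∈ ℤ^k. -/
/-- `Lamp q k` is `Σ = ⨁_{x ∈ ℤ^k} ℤ/qℤ`: finitely supported functions `ℤ^k → ℤ/qℤ`. -/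
abbrev Lamp (q k : ℕ) := (Fin k → ℤ) →₀ ZMod q

/-- The shift action of `ℤ^k` on `Σ`: `α(y)(δ_x) = δ_{x+y}`. -/
noncomputable def lampShift (q k : ℕ) :
    Multiplicative (Fin k → ℤ) →* MulAut (Multiplicative (Lamp q k)) where
  toFun y := AddEquiv.toMultiplicative (Finsupp.domCongr (Equiv.addRight (Multiplicative.toAdd y)))
  map_one' := by
    refine MulEquiv.ext fun f => ?_
    refine Multiplicative.toAdd.injective ?_
    ext x
    simp <;> rfl
  map_mul' y z := by
    refine MulEquiv.ext fun f => ?_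
    refine Multiplicative.toAdd.injective ?_
    ext x
    simp [Equiv.Perm.mul_def, add_comm, add_assoc, add_left_comm]

/-- The restricted wreath product `ℤ_q wr ℤ^k = Σ ⋊ ℤ^k`. -/
abbrev Wreath (q k : ℕ) :=
  SemidirectProduct (Multiplicative (Lamp q k)) (Multiplicative (Fin k → ℤ)) (lampShift q k)

/-- `δ_x ∈ Σ`: the function equal to `1` at `x` and `0` elsewhere (written multiplicatively). -/
noncomputable def lampDelta (q k : ℕ) (x : Fin k → ℤ) : Multiplicative (Lamp q k) :=
  Multiplicative.ofAdd (Finsupp.single x 1)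

/-!
Since `ℤ^k` is torsion-free, the lamp group `Σ` is exactly the set of elements of order at most 2,
so `φ` restricts to an additive map `φ'` of `Σ ≅ 𝔽₂[ℤ^k]`. Conjugating by a lift of `y` shifts
by `y`, so `φ'(t_y f) = t_{φ̄ y} φ'(f)`, whence `φ'(f) = φ̄_*(f) · φ'(1)`. Applied to `φ⁻¹`, this
shows that `φ'(1)` is a unit of `𝔽₂[ℤ^k]`. As `ℤ^k` has unique sums, the units of this group ring
are the monomials `t_{x₀}`, and so `φ'(δ_y) = δ_{φ̄ y + x₀}`.
-/

open SemidirectProduct Multiplicative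

namespace AddMonoidAlgebra

open Finset

theorem exists_eq_single_of_mul_eq_one {R A : Type*} [Semiring R] [NoZeroDivisors R]
    [AddMonoid A] [TwoUniqueSums A] {f g : AddMonoidAlgebra R A} (h : f * g = 1) :
    ∃ a r, f = single a r := by
  classical
  cases subsingleton_or_nontrivial R
  · exact ⟨0, 0, Subsingleton.elim _ _⟩
  set S := f.coeff.support
  set T := g.coeff.support
  have hT : T.Nonempty := by
    rw [Finsupp.support_nonempty_iff]
    rintro hg
    have : g = 0 := coeff_injective hg
    simp [this] at h
  have unique_sum_eq_zero : ∀ p ∈ S ×ˢ T, UniqueAdd S T p.1 p.2 → p.1 + p.2 = 0 := by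
    rintro ⟨a, b⟩ hp hu
    rw [mem_product] at hp
    have hne : (f * g).coeff (a + b) ≠ 0 := by
      rw [coeff_mul_add_of_uniqueAdd hu]
      exact mul_ne_zero (Finsupp.mem_support_iff.mp hp.1) (Finsupp.mem_support_iff.mp hp.2)
    rw [h, one_def, coeff_single] at hne
    by_contra hab
    exact hne (Finsupp.single_eq_of_ne hab)
  have hST : #S * #T ≤ 1 := by
    by_contra! hlt
    obtain ⟨p, hp, p', hp', hne, hu, hu'⟩ := TwoUniqueSums.uniqueAdd_of_one_lt_card hlt
    have hsum : p'.1 + p'.2 = p.1 + p.2 := by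
      rw [unique_sum_eq_zero p hp hu, unique_sum_eq_zero p' hp' hu']
    rw [mem_product] at hp'
    obtain ⟨h1, h2⟩ := hu hp'.1 hp'.2 hsum
    exact hne (Prod.ext h1 h2).symm
  have hS : #S ≤ 1 := by
    have := hT.card_pos
    nlinarith
  obtain ⟨a, r, hf⟩ := Finsupp.card_support_le_one'.mp hS
  exact ⟨a, r, coeff_injective hf⟩

theorem eq_mapDomain_mul_of_map_single_one_mul {R A : Type*} [Semiring R] [AddMonoid A]
    (L : AddMonoidAlgebra R A →ₗ[R] AddMonoidAlgebra R A) (B : A → A)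
    (hL : ∀ a f, L (single a 1 * f) = single (B a) 1 * L f) (f : AddMonoidAlgebra R A) :
    L f = mapDomain B f * L 1 := by
  induction f using induction_on with
  | of a => rw [of_apply, mapDomain_single, ← hL, mul_one]
  | add f g hf hg => rw [map_add, hf, hg, mapDomain_add, add_mul]
  | smul r f hf =>
    have : mapDomain B (r • f) = r • mapDomain B f := by ext; simp
    rw [map_smul, hf, this, smul_mul_assoc]

end AddMonoidAlgebra

namespace SemidirectProduct

variable {N G : Type*} [Group N] [Group G] {φ : G →* MulAut N}

theorem inl_left_eq_self_of_right_eq_one {γ : N ⋊[φ] G} (h : γ.right = 1) : inl γ.left = γ := by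
  conv_rhs => rw [← inl_left_mul_inr_right γ, h, map_one, mul_one]

theorem right_eq_one_of_pow_eq_one [IsMulTorsionFree G] {γ : N ⋊[φ] G} {n : ℕ} (hn : n ≠ 0)
    (h : γ ^ n = 1) : γ.right = 1 := by
  have : γ.right ^ n = 1 := by rw [← rightHom_eq_right, ← map_pow, h, map_one]
  exact (pow_eq_one_iff.mp this).resolve_right hn

theorem mul_inl_mul_inv [IsMulCommutative N] (γ : N ⋊[φ] G) (n : N) :
    γ * inl n * γ⁻¹ = inl (φ γ.right n) := by
  ext <;> simp [mul_comm']

end SemidirectProduct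

namespace Wreath

open AddMonoidAlgebra

variable {q k : ℕ} {F : Type*} [FunLike F (Wreath q k) (Wreath q k)]
  [MonoidHomClass F (Wreath q k) (Wreath q k)]

theorem lampDelta_injective [Nontrivial (ZMod q)] : Function.Injective (lampDelta q k) :=
  fun _ _ h => Finsupp.single_left_injective one_ne_zero (ofAdd.injective h)

theorem lamp_pow_eq_one (f : Multiplicative (Lamp q k)) : f ^ q = 1 := by
  apply toAdd.injective
  ext x
  simp

theorem lampShift_ofAdd_coeff (y : Fin k → ℤ) (f : (ZMod q)[Fin k → ℤ]) :
    lampShift q k (ofAdd y) (ofAdd f.coeff) = ofAdd (single y 1 * f).coeff := by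
  apply toAdd.injective
  ext x
  simp [lampShift, coeff_single_mul_apply, add_comm]

-- `φ̄`, computed on the lifts `inr y`.
noncomputable def inducedMap (φ : F) (y : Fin k → ℤ) : Fin k → ℤ :=
  toAdd (rightHom (φ (inr (ofAdd y))))

variable [NeZero q]

theorem right_map_inl (φ : F) (f : Multiplicative (Lamp q k)) :
    (φ (inl f)).right = 1 :=
  right_eq_one_of_pow_eq_one (NeZero.ne q) <| by
    rw [← map_pow, ← map_pow, lamp_pow_eq_one, map_one, map_one]

theorem inl_left_map_inl (φ : F) (f : Multiplicative (Lamp q k)) :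
    inl (φ (inl f)).left = φ (inl f) :=
  inl_left_eq_self_of_right_eq_one (right_map_inl φ f)

-- `φ'`, transported to the group ring, whose coefficient functions are the lamp configurations.
noncomputable def lampRestrict (φ : F) :
    (ZMod q)[Fin k → ℤ] →+ (ZMod q)[Fin k → ℤ] where
  toFun f := ofCoeff (toAdd (φ (inl (ofAdd f.coeff))).left)
  map_zero' := by simp
  map_add' f g := by
    rw [coeff_add, ofAdd_add, map_mul, map_mul, mul_left, right_map_inl, map_one,
      MulAut.one_apply, toAdd_mul, ofCoeff_add]

theorem inl_ofAdd_coeff_lampRestrict (φ : F) (f : (ZMod q)[Fin k → ℤ]) :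
    inl (ofAdd (lampRestrict φ f).coeff) = φ (inl (ofAdd f.coeff)) :=
  inl_left_map_inl φ _

theorem lampRestrict_lampRestrict_symm (φ : Wreath q k ≃* Wreath q k)
    (f : (ZMod q)[Fin k → ℤ]) :
    lampRestrict φ (lampRestrict φ.symm f) = f := by
  apply coeff_injective
  apply ofAdd.injective
  apply inl_injective (φ := lampShift q k)
  rw [inl_ofAdd_coeff_lampRestrict, inl_ofAdd_coeff_lampRestrict]
  exact φ.apply_symm_apply _

theorem lampRestrict_single_one_mul (φ : F) (y : Fin k → ℤ)
    (f : (ZMod q)[Fin k → ℤ]) :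
    lampRestrict φ (single y 1 * f) = single (inducedMap φ y) 1 * lampRestrict φ f := by
  have h : inl (ofAdd (lampRestrict φ (single y 1 * f)).coeff)
      = inl (ofAdd (single (inducedMap φ y) 1 * lampRestrict φ f).coeff) := calc
    inl (ofAdd (lampRestrict φ (single y 1 * f)).coeff)
      = φ (inl (lampShift q k (ofAdd y) (ofAdd f.coeff))) := by
        rw [inl_ofAdd_coeff_lampRestrict, lampShift_ofAdd_coeff]
    _ = φ (inr (ofAdd y)) * inl (ofAdd (lampRestrict φ f).coeff) * (φ (inr (ofAdd y)))⁻¹ := by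
        rw [inl_aut, map_mul, map_mul, map_inv, map_inv, inl_ofAdd_coeff_lampRestrict]
    _ = inl (lampShift q k (ofAdd (inducedMap φ y)) (ofAdd (lampRestrict φ f).coeff)) :=
        mul_inl_mul_inv _ _
    _ = inl (ofAdd (single (inducedMap φ y) 1 * lampRestrict φ f).coeff) :=
        congrArg inl (lampShift_ofAdd_coeff _ _)
  exact coeff_injective (ofAdd.injective (inl_injective h))

theorem exists_map_inl_lampDelta (φ : Wreath 2 k ≃* Wreath 2 k) :
    ∃ x₀, ∀ y, φ (inl (lampDelta 2 k y)) = inl (lampDelta 2 k (inducedMap φ y + x₀)) := by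
  set L := lampRestrict φ
  have hL : ∀ f, L f = mapDomain (inducedMap φ) f * L 1 :=
    eq_mapDomain_mul_of_map_single_one_mul (L.toZModLinearMap 2) (inducedMap φ)
      (lampRestrict_single_one_mul φ)
  have hunit : L 1 * mapDomain (inducedMap φ) (lampRestrict φ.symm 1) = 1 := by
    rw [mul_comm, ← hL, lampRestrict_lampRestrict_symm]
  obtain ⟨x₀, r, hr⟩ := exists_eq_single_of_mul_eq_one hunit
  have hr0 : r ≠ 0 := by
    rintro rfl
    simp [hr] at hunit
  obtain rfl : r = 1 := Fin.eq_one_of_ne_zero r hr0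
  refine ⟨x₀, fun y => ?_⟩
  rw [hr] at hL
  have := inl_ofAdd_coeff_lampRestrict φ (single y 1)
  rw [hL, mapDomain_single, single_mul_single, one_mul] at this
  exact this.symm

end Wreath

open Wreath

theorem stmt7_general (k : ℕ) (φ : Wreath 2 k ≃* Wreath 2 k) :
    (∃ σ : (Fin k → ℤ) ≃ (Fin k → ℤ),
      ∀ x : Fin k → ℤ, φ (SemidirectProduct.inl (lampDelta 2 k x))
        = SemidirectProduct.inl (lampDelta 2 k (σ x))) ∧
    (∃! x₀ : Fin k → ℤ,
      φ (SemidirectProduct.inl (lampDelta 2 k 0))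
        = SemidirectProduct.inl (lampDelta 2 k x₀)) ∧
    (∀ (B : (Fin k → ℤ) ≃+ (Fin k → ℤ)) (x₀ : Fin k → ℤ),
      (∀ γ : Wreath 2 k, Multiplicative.toAdd (SemidirectProduct.rightHom (φ γ))
          = B (Multiplicative.toAdd (SemidirectProduct.rightHom γ))) →
      φ (SemidirectProduct.inl (lampDelta 2 k 0))
        = SemidirectProduct.inl (lampDelta 2 k x₀) →
      ∀ y : Fin k → ℤ, φ (SemidirectProduct.inl (lampDelta 2 k y))
        = SemidirectProduct.inl (lampDelta 2 k (B y + x₀))) := by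
  obtain ⟨x₀, hφ⟩ := exists_map_inl_lampDelta φ
  obtain ⟨x₁, hψ⟩ := exists_map_inl_lampDelta φ.symm
  have inl_lampDelta_inj {x y : Fin k → ℤ}
      (h : (inl (lampDelta 2 k x) : Wreath 2 k) = inl (lampDelta 2 k y)) : x = y :=
    lampDelta_injective (inl_injective h)
  let σ : (Fin k → ℤ) ≃ (Fin k → ℤ) :=
    { toFun y := inducedMap φ y + x₀
      invFun y := inducedMap φ.symm y + x₁
      left_inv y := inl_lampDelta_inj <| by rw [← hψ, ← hφ, φ.symm_apply_apply]
      right_inv y := inl_lampDelta_inj <| by rw [← hφ, ← hψ, φ.apply_symm_apply] }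
  refine ⟨⟨σ, hφ⟩, ⟨σ 0, hφ 0, fun x hx => inl_lampDelta_inj (hx.symm.trans (hφ 0))⟩, ?_⟩
  intro B x₀' hB hx₀' y
  have hBφ (z : Fin k → ℤ) : inducedMap φ z = B z := by
    simpa only [inducedMap, rightHom_inr, toAdd_ofAdd] using hB (inr (ofAdd z))
  obtain rfl : x₀' = x₀ := inl_lampDelta_inj <| by rw [← hx₀', hφ, hBφ, map_zero, zero_add]
  rw [hφ, hBφ]

/-- For any automorphism `φ` of `ℤ_2 wr ℤ^k`, the restriction `φ'` to `Σ` permutes the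
`δ_x`'s; there is a unique `x₀` with `φ'(δ_0) = δ_{x₀}`, and then
`φ'(δ_y) = δ_{φ̄(y) + x₀}` for the induced automorphism `φ̄` of `ℤ^k`. -/
theorem stmt7 (k : ℕ) (hk : 1 ≤ k) (φ : Wreath 2 k ≃* Wreath 2 k) :
    (∃ σ : (Fin k → ℤ) ≃ (Fin k → ℤ),
      ∀ x : Fin k → ℤ, φ (SemidirectProduct.inl (lampDelta 2 k x))
        = SemidirectProduct.inl (lampDelta 2 k (σ x))) ∧
    (∃! x₀ : Fin k → ℤ,
      φ (SemidirectProduct.inl (lampDelta 2 k 0))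
        = SemidirectProduct.inl (lampDelta 2 k x₀)) ∧
    (∀ (B : (Fin k → ℤ) ≃+ (Fin k → ℤ)) (x₀ : Fin k → ℤ),
      (∀ γ : Wreath 2 k, Multiplicative.toAdd (SemidirectProduct.rightHom (φ γ))
          = B (Multiplicative.toAdd (SemidirectProduct.rightHom γ))) →
      φ (SemidirectProduct.inl (lampDelta 2 k 0))
        = SemidirectProduct.inl (lampDelta 2 k x₀) →
      ∀ y : Fin k → ℤ, φ (SemidirectProduct.inl (lampDelta 2 k y))
        = SemidirectProduct.inl (lampDelta 2 k (B y + x₀))) :=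
  stmt7_general k φ
end

section
/- Let k ≥ 1, let A ∈ GL(k, ℤ), let x₀ ∈ ℤ^k, and let φ' be the additive automorphism of Σ = ⨁_{x ∈ ℤ^k} ℤ/2ℤ defined by φ'(δ_y) = δ_{A y + x₀} for all y ∈ ℤ^k. If δ_{x₁} and δ_{x₂} lie in the same Reidemeister class of φ' (equivalently, δ_{x₁} − δ_{x₂} lies in the range of id − φ'), then there exists an integer t ≥ 0 such that A^t x₁ + A^{t−1} x₀ + ⋯ + A x₀ + x₀ = x₂ or A^t x₂ + A^{t−1} x₀ + ⋯ + A x₀ + x₀ = x₁. -/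
/-!
Push the identity `δ_{x₁} - δ_{x₂} = f - ψ_* f`, where `ψ y = A y + x₀`, forward along the
quotient map onto the `ψ`-orbits. Pushing forward kills `f - ψ_* f`, because the quotient map is
`ψ`-invariant, so `x₁` and `x₂` lie in the same `ψ`-orbit: `x₂ = ψ^n x₁` for some `n : ℤ`.
According to the sign of `n`, one of `x₁`, `x₂` is a forward iterate of the other, and
`ψ^t y = A^t y + A^{t-1} x₀ + ⋯ + x₀`.
-/

open Finsupp

namespace Finsupp

variable {α β M : Type*} [AddCommGroup M]

theorem mapDomain_sub_equivMapDomain_eq_zero {π : α → β} (e : α ≃ α) (hπ : ∀ a, π (e a) = π a)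
    (f : α →₀ M) : mapDomain π (f - equivMapDomain e f) = 0 := by
  have hπe : π ∘ e = π := funext hπ
  rw [mapDomain_sub, equivMapDomain_eq_mapDomain, ← mapDomain_comp, hπe, sub_self]

end Finsupp

namespace Equiv.Perm

variable {α M : Type*}

theorem SameCycle.of_single_sub_single_eq_sub_equivMapDomain [AddCommGroup M] (ψ : Perm α)
    {x₁ x₂ : α} {m : M} (hm : m ≠ 0) (f : α →₀ M)
    (h : single x₁ m - single x₂ m = f - equivMapDomain ψ f) : ψ.SameCycle x₁ x₂ := by
  let π : α → Quotient (SameCycle.setoid ψ) := Quotient.mk _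
  have hπ : ∀ a, π (ψ a) = π a := fun a => Quotient.sound (sameCycle_apply_left.mpr (.refl ψ a))
  have hpush := congrArg (mapDomain π) h
  rw [mapDomain_sub_equivMapDomain_eq_zero ψ hπ, mapDomain_sub, mapDomain_single,
    mapDomain_single, sub_eq_zero, single_left_inj hm] at hpush
  exact Quotient.exact hpush

theorem SameCycle.exists_nat_pow_apply_eq_or {ψ : Perm α} {x y : α} (h : ψ.SameCycle x y) :
    ∃ t : ℕ, (ψ ^ t) x = y ∨ (ψ ^ t) y = x := by
  obtain ⟨n, hn⟩ := h
  obtain ⟨t, rfl | rfl⟩ := Int.eq_nat_or_neg n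
  · exact ⟨t, Or.inl (by rwa [zpow_natCast] at hn)⟩
  · rw [zpow_neg, zpow_natCast, inv_eq_iff_eq] at hn
    exact ⟨t, Or.inr hn.symm⟩

end Equiv.Perm

namespace AddAut

variable {G : Type*} [AddCommGroup G]

def affinePerm (A : AddAut G) (c : G) : Equiv.Perm G :=
  A.toEquiv.trans (Equiv.addRight c)

@[simp]
theorem affinePerm_apply (A : AddAut G) (c y : G) : affinePerm A c y = A y + c :=
  rfl

theorem affinePerm_pow_apply (A : AddAut G) (c : G) (t : ℕ) (y : G) :
    (affinePerm A c ^ t) y = (t • A) y + ∑ i ∈ Finset.range t, (i • A) c := by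
  induction t generalizing y with
  | zero => simp
  | succ t ih =>
    rw [pow_succ, Equiv.Perm.mul_apply, affinePerm_apply, ih, Finset.sum_range_succ, succ_nsmul,
      add_apply, map_add]
    abel

end AddAut

theorem stmt8_general (k : ℕ) (A : AddAut (Fin k → ℤ)) (x₀ : Fin k → ℤ)
    (x₁ x₂ : Fin k → ℤ)
    (h : ∃ f : (Fin k → ℤ) →₀ ZMod 2,
      Finsupp.single x₁ 1 - Finsupp.single x₂ 1
        = f - Finsupp.equivMapDomain (A.toEquiv.trans (Equiv.addRight x₀)) f) :
    ∃ t : ℕ,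
      (t • A) x₁ + ∑ i ∈ Finset.range t, (i • A) x₀ = x₂ ∨
      (t • A) x₂ + ∑ i ∈ Finset.range t, (i • A) x₀ = x₁ := by
  obtain ⟨f, hf⟩ := h
  have hcycle := Equiv.Perm.SameCycle.of_single_sub_single_eq_sub_equivMapDomain
    (AddAut.affinePerm A x₀) one_ne_zero f hf
  obtain ⟨t, ht⟩ := hcycle.exists_nat_pow_apply_eq_or
  exact ⟨t, by simpa only [AddAut.affinePerm_pow_apply] using ht⟩

/-- If `δ_{x₁} - δ_{x₂}` lies in the range of `id - φ'` where `φ'(δ_y) = δ_{A y + x₀}`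
on `Σ = ⨁_{ℤ^k} ℤ/2ℤ`, then `A^t x₁ + A^{t-1} x₀ + ⋯ + x₀ = x₂` or
`A^t x₂ + A^{t-1} x₀ + ⋯ + x₀ = x₁` for some `t ≥ 0`. -/
theorem stmt8 (k : ℕ) (hk : 1 ≤ k) (A : AddAut (Fin k → ℤ)) (x₀ : Fin k → ℤ)
    (x₁ x₂ : Fin k → ℤ)
    (h : ∃ f : (Fin k → ℤ) →₀ ZMod 2,
      Finsupp.single x₁ 1 - Finsupp.single x₂ 1
        = f - Finsupp.equivMapDomain (A.toEquiv.trans (Equiv.addRight x₀)) f) :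
    ∃ t : ℕ,
      (t • A) x₁ + ∑ i ∈ Finset.range t, (i • A) x₀ = x₂ ∨
      (t • A) x₂ + ∑ i ∈ Finset.range t, (i • A) x₀ = x₁ :=
  stmt8_general k A x₀ x₁ x₂ h
end

section
/- Let p be a prime, k ≥ 1, A ∈ GL(k, ℤ), m ∈ ℤ/pℤ with m ≠ 0, and let φ' be the additive automorphism of Σ = ⨁_{x ∈ ℤ^k} ℤ/pℤ defined by φ'(δ_y) = m·δ_{A y} for all y ∈ ℤ^k. If x ∈ ℤ^k has infinite orbit {Aⁿ x : n ∈ ℤ} under A, then the restriction of id − φ' to the subgroup of elements of Σ supported in this orbit is not surjective onto that subgroup; in particular, δ_x does not lie in the image of this restriction. -/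
/-!
Index the orbit by `n ↦ Aⁿ x`, which is injective because the orbit is infinite, and give the
point `Aⁿ x` the weight `m⁻ⁿ` and every point off the orbit the weight `0`. Since `m · w(A y) = w(y)`
for all `y`, the functional `f ↦ ∑ f(y) w(y)` vanishes on every `f - m • φ'(f)`, but it takes
the value `1` on `δ_x`.
-/

open Function Finsupp

theorem injective_zsmul_vadd_of_infinite_range {G α : Type*} [AddGroup G] [AddAction G α]
    (g : G) (x : α) (h : (Set.range fun n : ℤ => (n • g) +ᵥ x).Infinite) :
    Injective fun n : ℤ => (n • g) +ᵥ x := by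
  intro a b hab
  by_contra hne
  change (a • g) +ᵥ x = (b • g) +ᵥ x at hab
  have hfix : ((-b + a) • g) +ᵥ x = x := by
    rw [add_zsmul, add_vadd, hab, ← add_vadd, ← add_zsmul, neg_add_cancel, zero_zsmul, zero_vadd]
  have hper : Periodic (fun n : ℤ => (n • g) +ᵥ x) (-b + a) := fun n => by
    change ((n + (-b + a)) • g) +ᵥ x = _
    rw [add_zsmul, add_vadd, hfix]
  refine h ?_
  rw [← hper.image_uIcc (by omega) 0]
  exact (Set.finite_Icc _ _).image _

section OrbitWeight

variable {α K : Type*} [Field K] (orb : ℤ → α) (m : K)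

noncomputable def orbitWeight : α → K := extend orb (fun n => m ^ (-n)) 0

variable {orb}

theorem orbitWeight_apply_orb (horb : Injective orb) (n : ℤ) :
    orbitWeight orb m (orb n) = m ^ (-n) :=
  horb.extend_apply _ _ n

theorem orbitWeight_apply_of_notMem_range {y : α} (hy : y ∉ Set.range orb) :
    orbitWeight orb m y = 0 :=
  extend_apply' _ _ _ hy

variable {e : α ≃ α} {m}

theorem mul_orbitWeight_apply (horb : Injective orb) (he : ∀ n, e (orb n) = orb (n + 1))
    (hm : m ≠ 0) (y : α) : m * orbitWeight orb m (e y) = orbitWeight orb m y := by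
  by_cases hy : y ∈ Set.range orb
  · obtain ⟨n, rfl⟩ := hy
    rw [he, orbitWeight_apply_orb m horb, orbitWeight_apply_orb m horb, neg_add_rev,
      zpow_add₀ hm, zpow_neg_one, mul_inv_cancel_left₀ hm]
  · have hey : e y ∉ Set.range orb := by
      rintro ⟨n, hn⟩
      refine hy ⟨n - 1, e.injective ?_⟩
      rw [he, sub_add_cancel, hn]
    rw [orbitWeight_apply_of_notMem_range m hy, orbitWeight_apply_of_notMem_range m hey, mul_zero]

theorem linearCombination_orbitWeight_sub_smul_equivMapDomain (horb : Injective orb)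
    (he : ∀ n, e (orb n) = orb (n + 1)) (hm : m ≠ 0) (f : α →₀ K) :
    linearCombination K (orbitWeight orb m) (f - m • equivMapDomain e f) = 0 := by
  rw [map_sub, map_smul, linearCombination_equivMapDomain, sub_eq_zero, linearCombination_apply,
    linearCombination_apply, smul_sum]
  refine sum_congr fun y _ => ?_
  rw [comp_apply, smul_eq_mul, smul_eq_mul, smul_eq_mul, mul_left_comm,
    mul_orbitWeight_apply horb he hm]

theorem sub_smul_equivMapDomain_ne_single (horb : Injective orb)
    (he : ∀ n, e (orb n) = orb (n + 1)) (hm : m ≠ 0) (f : α →₀ K) :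
    f - m • equivMapDomain e f ≠ single (orb 0) 1 := by
  intro h
  have hvanish := linearCombination_orbitWeight_sub_smul_equivMapDomain horb he hm f
  rw [h, linearCombination_single, orbitWeight_apply_orb m horb, neg_zero, zpow_zero,
    smul_eq_mul, mul_one] at hvanish
  exact one_ne_zero hvanish

end OrbitWeight

theorem stmt12_general (p k : ℕ) (hp : p.Prime) (A : AddAut (Fin k → ℤ))
    (m : ZMod p) (hm : m ≠ 0) (x : Fin k → ℤ)
    (hx : {v : Fin k → ℤ | ∃ n : ℤ, (n • A) x = v}.Infinite) :
    (¬ ∀ g : (Fin k → ℤ) →₀ ZMod p, (∀ y, (¬ ∃ n : ℤ, (n • A) x = y) → g y = 0) →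
        ∃ f : (Fin k → ℤ) →₀ ZMod p, (∀ y, (¬ ∃ n : ℤ, (n • A) x = y) → f y = 0) ∧
          f - m • Finsupp.equivMapDomain A.toEquiv f = g) ∧
    ¬ ∃ f : (Fin k → ℤ) →₀ ZMod p, (∀ y, (¬ ∃ n : ℤ, (n • A) x = y) → f y = 0) ∧
        f - m • Finsupp.equivMapDomain A.toEquiv f = Finsupp.single x 1 := by
  have := Fact.mk hp
  have hshift (n : ℤ) : A.toEquiv ((n • A) +ᵥ x) = ((n + 1) • A) +ᵥ x := by
    rw [add_comm, add_zsmul, one_zsmul, add_vadd]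
    rfl
  have hδ (f : (Fin k → ℤ) →₀ ZMod p) : f - m • equivMapDomain A.toEquiv f ≠ single x 1 :=
    sub_smul_equivMapDomain_ne_single (injective_zsmul_vadd_of_infinite_range A x hx) hshift hm f
  have hsupp (y : Fin k → ℤ) (hy : ¬ ∃ n : ℤ, (n • A) x = y) : single x (1 : ZMod p) y = 0 :=
    single_eq_of_ne fun hxy => hy ⟨0, by simpa using hxy.symm⟩
  refine ⟨fun hsurj => ?_, fun ⟨f, _, hf⟩ => hδ f hf⟩
  obtain ⟨f, -, hf⟩ := hsurj (single x 1) hsupp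
  exact hδ f hf

/-- If `x` has infinite `A`-orbit, then `id - φ'`, where `φ'(δ_y) = m·δ_{A y}` on
`Σ = ⨁_{ℤ^k} ℤ/pℤ`, is not surjective on the subgroup of elements supported in the
orbit of `x`; in particular `δ_x` is not in the image of this restriction. -/
theorem stmt12 (p k : ℕ) (hp : p.Prime) (hk : 1 ≤ k) (A : AddAut (Fin k → ℤ))
    (m : ZMod p) (hm : m ≠ 0) (x : Fin k → ℤ)
    (hx : {v : Fin k → ℤ | ∃ n : ℤ, (n • A) x = v}.Infinite) :
    (¬ ∀ g : (Fin k → ℤ) →₀ ZMod p, (∀ y, (¬ ∃ n : ℤ, (n • A) x = y) → g y = 0) →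
        ∃ f : (Fin k → ℤ) →₀ ZMod p, (∀ y, (¬ ∃ n : ℤ, (n • A) x = y) → f y = 0) ∧
          f - m • Finsupp.equivMapDomain A.toEquiv f = g) ∧
    ¬ ∃ f : (Fin k → ℤ) →₀ ZMod p, (∀ y, (¬ ∃ n : ℤ, (n • A) x = y) → f y = 0) ∧
        f - m • Finsupp.equivMapDomain A.toEquiv f = Finsupp.single x 1 :=
  stmt12_general p k hp A m hm x hx
end

section
/- Let k ≥ 1 and A ∈ GL(k, ℤ), acting on ℤ^k. (a) For every x ∈ ℤ^k with x ≠ 0, there are infinitely many pairwise distinct orbits of the cyclic group generated by A whose cardinality equals the cardinality of the orbit of x (such orbits occur among the orbits of the multiples i·x, i ≥ 1). (b) If the automorphism of ℤ^k given by A has finite Reidemeister number, then 0 is the only fixed point of A on ℤ^k, i.e. the only orbit consisting of a single point is {0}. -/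
/-!
(a) The content (gcd of the coordinates) of a vector in `ℤ^k` is invariant under additive
automorphisms, so for `x ≠ 0` the orbits of the multiples `(i + 1) • x` are pairwise distinct.
Multiplication by `i + 1` is injective and commutes with `A`, so each of these orbits has the
cardinality of the orbit of `x`.

(b) In an abelian group the Reidemeister classes of `A` are the cosets of the image of `1 - A`.
If there are finitely many, the cokernel of `1 - A` is torsion, so by rank-nullity the kernel of
`1 - A` has rank `0`; being a subgroup of the torsion-free group `ℤ^k`, it is trivial.
-/

open Cardinal

namespace AddAut

variable {M : Type*} [AddCommGroup M]

def cyclicOrbit (A : AddAut M) (v : M) : Set M := {w | ∃ n : ℤ, (n • A) v = w}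

variable (A : AddAut M)

theorem mem_cyclicOrbit_self (v : M) : v ∈ A.cyclicOrbit v := ⟨0, rfl⟩

theorem cyclicOrbit_zsmul (c : ℤ) (v : M) :
    A.cyclicOrbit (c • v) = (c • ·) '' A.cyclicOrbit v := by
  ext w
  simp [cyclicOrbit]

theorem mk_cyclicOrbit_zsmul [Module.IsTorsionFree ℤ M] {c : ℤ} (hc : c ≠ 0) (v : M) :
    #(A.cyclicOrbit (c • v)) = #(A.cyclicOrbit v) := by
  rw [cyclicOrbit_zsmul]
  exact mk_image_eq (smul_right_injective M hc)

end AddAut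

namespace Int

variable {ι : Type*} [Fintype ι]

def vecContent (v : ι → ℤ) : ℤ := Finset.univ.gcd v

theorem vecContent_nonneg (v : ι → ℤ) : 0 ≤ vecContent v :=
  Int.nonneg_of_normalize_eq_self Finset.normalize_gcd

theorem dvd_vecContent_iff {d : ℤ} {v : ι → ℤ} : d ∣ vecContent v ↔ ∀ i, d ∣ v i := by
  simp [vecContent, Finset.dvd_gcd_iff]

theorem vecContent_eq_zero_iff {v : ι → ℤ} : vecContent v = 0 ↔ v = 0 := by
  simp [vecContent, Finset.gcd_eq_zero_iff, funext_iff]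

theorem vecContent_zsmul (c : ℤ) (v : ι → ℤ) : vecContent (c • v) = |c| * vecContent v := by
  rw [Int.abs_eq_normalize, vecContent, vecContent, ← Finset.gcd_mul_left]
  rfl

theorem vecContent_dvd_vecContent_map (f : (ι → ℤ) →+ (ι → ℤ)) (v : ι → ℤ) :
    vecContent v ∣ vecContent (f v) := by
  choose u hu using dvd_vecContent_iff.mp (dvd_refl (vecContent v))
  have hfv : f v = vecContent v • f u := by
    rw [← map_zsmul]
    exact congrArg f (funext hu)
  exact dvd_vecContent_iff.mpr fun i => hfv ▸ Dvd.intro _ rfl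

theorem vecContent_map_addEquiv (f : (ι → ℤ) ≃+ (ι → ℤ)) (v : ι → ℤ) :
    vecContent (f v) = vecContent v :=
  Int.dvd_antisymm (vecContent_nonneg _) (vecContent_nonneg _)
    (by simpa using vecContent_dvd_vecContent_map f.symm.toAddMonoidHom (f v))
    (vecContent_dvd_vecContent_map f.toAddMonoidHom v)

end Int

namespace AddAut

variable {ι : Type*} [Fintype ι]

theorem vecContent_eq_of_mem_cyclicOrbit {A : AddAut (ι → ℤ)} {v w : ι → ℤ}
    (h : w ∈ A.cyclicOrbit v) : Int.vecContent w = Int.vecContent v := by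
  obtain ⟨n, rfl⟩ := h
  exact Int.vecContent_map_addEquiv (n • A) v

theorem infinite_setOf_cyclicOrbit_mk_eq (A : AddAut (ι → ℤ)) {x : ι → ℤ} (hx : x ≠ 0) :
    {S : Set (ι → ℤ) | (∃ v, S = A.cyclicOrbit v) ∧ #S = #(A.cyclicOrbit x)}.Infinite := by
  have hc : Int.vecContent x ≠ 0 := Int.vecContent_eq_zero_iff.not.mpr hx
  refine Set.infinite_of_injective_forall_mem
    (f := fun i : ℕ => A.cyclicOrbit (((i : ℤ) + 1) • x)) (fun i j hij => ?_)
    fun i => ⟨⟨_, rfl⟩, A.mk_cyclicOrbit_zsmul (by positivity) x⟩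
  have hmem : ((i : ℤ) + 1) • x ∈ A.cyclicOrbit (((j : ℤ) + 1) • x) :=
    (congrFun hij _).mp (A.mem_cyclicOrbit_self _)
  have := vecContent_eq_of_mem_cyclicOrbit hmem
  rw [Int.vecContent_zsmul, Int.vecContent_zsmul, abs_of_pos (by positivity),
    abs_of_pos (by positivity)] at this
  exact_mod_cast add_right_cancel (mul_right_cancel₀ hc this)

end AddAut

theorem LinearMap.ker_eq_bot_of_isTorsion_quotient_range {R M : Type*} [CommRing R] [IsDomain R]
    [AddCommGroup M] [Module R M] [Module.Finite R M] [Module.IsTorsionFree R M]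
    (f : M →ₗ[R] M) (h : Module.IsTorsion R (M ⧸ LinearMap.range f)) : LinearMap.ker f = ⊥ := by
  have hrange := (LinearMap.range f).finrank_quotient_add_finrank
  rw [h.finrank_eq_zero, zero_add] at hrange
  have := Submodule.disjoint_ker_of_finrank_le (L := ⊤) f (by
    rw [Submodule.map_top, hrange, finrank_top])
  exact top_disjoint.mp this

namespace AddAut

variable {M : Type*} [AddCommGroup M]

theorem finite_quotient_range_of_finite_reidemeister (A : AddAut M)
    (hfin : Finite (Quot fun v w : M => ∃ h : M, w = h + v - A h)) :
    Finite (M ⧸ LinearMap.range (LinearMap.id - A.toIntLinearEquiv.toLinearMap)) := by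
  refine Finite.of_surjective
    (Quot.lift (r := fun v w : M => ∃ h : M, w = h + v - A h) Submodule.Quotient.mk ?_) ?_
  · rintro v _ ⟨h, rfl⟩
    rw [Submodule.Quotient.eq]
    exact ⟨-h, by
      simp only [LinearMap.sub_apply, LinearMap.id_coe, id_eq, LinearEquiv.coe_coe,
        AddEquiv.coe_toIntLinearEquiv, map_neg]
      abel⟩
  · intro y
    obtain ⟨v, rfl⟩ := Submodule.Quotient.mk_surjective _ y
    exact ⟨Quot.mk _ v, rfl⟩

theorem eq_zero_of_apply_eq_self_of_finite_reidemeister [Module.Finite ℤ M]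
    [Module.IsTorsionFree ℤ M] (A : AddAut M)
    (hfin : Finite (Quot fun v w : M => ∃ h : M, w = h + v - A h)) {v : M} (hv : A v = v) :
    v = 0 := by
  set f : M →ₗ[ℤ] M := LinearMap.id - A.toIntLinearEquiv.toLinearMap
  have : Finite (M ⧸ LinearMap.range f) := A.finite_quotient_range_of_finite_reidemeister hfin
  have hker := f.ker_eq_bot_of_isTorsion_quotient_range
    (isAddTorsion_iff_isTorsion_int.mp isAddTorsion_of_finite)
  rw [LinearMap.ker_eq_bot'] at hker
  exact hker v (by simp [f, hv])

end AddAut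

theorem stmt13_general (k : ℕ) (A : AddAut (Fin k → ℤ)) :
    (∀ x : Fin k → ℤ, x ≠ 0 →
      {S : Set (Fin k → ℤ) | (∃ v : Fin k → ℤ, S = {w | ∃ n : ℤ, (n • A) v = w}) ∧
        Cardinal.mk S = Cardinal.mk {w : Fin k → ℤ | ∃ n : ℤ, (n • A) x = w}}.Infinite) ∧
    (Finite (Quot (fun v w : Fin k → ℤ => ∃ h : Fin k → ℤ, w = h + v - A h)) →
      ∀ v : Fin k → ℤ, A v = v → v = 0) :=
  ⟨fun _ hx => A.infinite_setOf_cyclicOrbit_mk_eq hx,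
    fun h _ hv => A.eq_zero_of_apply_eq_self_of_finite_reidemeister h hv⟩

/-- (a) For `x ≠ 0` there are infinitely many orbits of `A ∈ GL(k,ℤ)` on `ℤ^k` of the
same cardinality as the orbit of `x`. (b) If the automorphism `A` of `ℤ^k` has finite
Reidemeister number, then `0` is its only fixed point. -/
theorem stmt13 (k : ℕ) (hk : 1 ≤ k) (A : AddAut (Fin k → ℤ)) :
    (∀ x : Fin k → ℤ, x ≠ 0 →
      {S : Set (Fin k → ℤ) | (∃ v : Fin k → ℤ, S = {w | ∃ n : ℤ, (n • A) v = w}) ∧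
        Cardinal.mk S = Cardinal.mk {w : Fin k → ℤ | ∃ n : ℤ, (n • A) x = w}}.Infinite) ∧
    (Finite (Quot (fun v w : Fin k → ℤ => ∃ h : Fin k → ℤ, w = h + v - A h)) →
      ∀ v : Fin k → ℤ, A v = v → v = 0) :=
  stmt13_general k A
end

section
/- Let p > 3 be a prime and k ≥ 1. Then there exists an automorphism φ of Γ = ℤ_p wr ℤ^k with finite Reidemeister number R(φ) < ∞ (for instance, the automorphism induced by φ̄ = −Id on ℤ^k and multiplication by m = 2 on each summand ℤ/pℤ). Consequently, ℤ_p wr ℤ^k does not have property R_∞ for any prime p > 3. -/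
/-!
Take `φ = twistAut u`, acting by `σ ↦ u • σ(-·)` on `Σ` and by `-Id` on `ℤ^k`. Twisting `(σ, y)` by
an element `τ ∈ Σ` changes `σ` by `(1 - T) τ`, where `T = shift_y ∘ twist` satisfies `T² = u²`;
so when `u² - 1` is a unit, `1 - T` is onto and every element is twisted-conjugate to its
`ℤ^k`-part. On `ℤ^k` twisting by `z` sends `y` to `y + 2z`, so only `y mod 2` survives and
`R(φ) ≤ 2^k`. For `p > 3`, `u = 2` works since `u² - 1 = 3` is a unit mod `p`.
-/

open SemidirectProduct Multiplicative

namespace Wreath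

variable {q k : ℕ}

lemma toAdd_lampShift_apply (y : Multiplicative (Fin k → ℤ)) (σ : Multiplicative (Lamp q k))
    (x : Fin k → ℤ) : toAdd (lampShift q k y σ) x = toAdd σ (x - toAdd y) := by
  simp [lampShift, Finsupp.equivMapDomain_apply, sub_eq_add_neg]

noncomputable def lampTwist (u : (ZMod q)ˣ) :
    Multiplicative (Lamp q k) ≃* Multiplicative (Lamp q k) :=
  AddEquiv.toMultiplicative
    ((DistribMulAction.toAddEquiv _ u).trans (Finsupp.domCongr (Equiv.neg _)))

lemma toAdd_lampTwist_apply (u : (ZMod q)ˣ) (σ : Multiplicative (Lamp q k)) (x : Fin k → ℤ) :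
    toAdd (lampTwist u σ) x = u * toAdd σ (-x) := by
  simp [lampTwist, Finsupp.equivMapDomain_apply, Units.smul_def]

lemma lampShift_trans_lampTwist (u : (ZMod q)ˣ) (y : Multiplicative (Fin k → ℤ)) :
    (lampShift q k y).trans (lampTwist u) = (lampTwist u).trans (lampShift q k y⁻¹) := by
  ext σ x
  simp only [MulEquiv.trans_apply, toAdd_lampTwist_apply, toAdd_lampShift_apply, toAdd_inv,
    sub_neg_eq_add, neg_add']

noncomputable def twistAut (u : (ZMod q)ˣ) : Wreath q k ≃* Wreath q k :=
  SemidirectProduct.congr (lampTwist u) (MulEquiv.inv _) (lampShift_trans_lampTwist u)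

variable (u : (ZMod q)ˣ)

lemma twistAut_inl (σ : Multiplicative (Lamp q k)) :
    twistAut u (inl σ) = inl (lampTwist u σ) :=
  SemidirectProduct.ext (congr_apply_left ..) inv_one

lemma twistAut_inr (y : Multiplicative (Fin k → ℤ)) :
    twistAut u (inr y) = inr y⁻¹ :=
  SemidirectProduct.ext (map_one _) rfl

lemma twistedConj_inr_right (hu : IsUnit ((u : ZMod q) ^ 2 - 1)) (g : Wreath q k) :
    twistedConj (twistAut u) g (inr g.right) := by
  obtain ⟨c, hc⟩ := hu.exists_left_inv
  -- `τ = (u² - 1)⁻¹ (1 + T) σ`, so that `(1 - T) τ = -σ`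
  let τ := c • (toAdd g.left + toAdd (lampShift q k g.right (lampTwist u g.left)))
  refine ⟨inl (ofAdd τ), ?_⟩
  rw [twistAut_inl]
  refine SemidirectProduct.ext ?_ (by simp)
  ext x
  simp only [mul_left, mul_right, left_inl, right_inl, left_inr, one_mul, map_one,
    MulAut.one_apply, ← map_inv, toAdd_mul, toAdd_inv, toAdd_ofAdd, toAdd_one, Finsupp.add_apply,
    Finsupp.neg_apply, Finsupp.smul_apply, Finsupp.coe_zero, Pi.zero_apply, smul_eq_mul,
    toAdd_lampShift_apply, toAdd_lampTwist_apply, τ]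
  rw [neg_sub, sub_sub_cancel_left, neg_neg]
  linear_combination (toAdd g.left x) * hc

lemma twistedConj_inr_add_two_nsmul (y z : Fin k → ℤ) :
    twistedConj (twistAut u) (inr (ofAdd y)) (inr (ofAdd (y + 2 • z))) := by
  refine ⟨inr (ofAdd z), ?_⟩
  rw [twistAut_inr, ← map_inv, inv_inv, ← map_mul, ← map_mul, ← ofAdd_add, ← ofAdd_add,
    two_nsmul, add_comm z y, add_assoc]

theorem finite_reidemeisterClasses_twistAut (hu : IsUnit ((u : ZMod q) ^ 2 - 1)) :
    Finite (ReidemeisterClasses (twistAut (k := k) u)) := by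
  let rep : (Fin k → ZMod 2) → ReidemeisterClasses (twistAut (k := k) u) :=
    fun v => Quot.mk _ (inr (ofAdd fun i => ((v i).val : ℤ)))
  refine Finite.of_surjective rep ?_
  rintro ⟨g⟩
  set y := toAdd g.right
  refine ⟨fun i => (y i : ZMod 2), ?_⟩
  have hy : (fun i => ((y i : ZMod 2).val : ℤ)) + 2 • (fun i => y i / 2) = y := by
    funext i
    change ((y i : ZMod 2).val : ℤ) + 2 • (y i / 2) = y i
    rw [ZMod.val_intCast, nsmul_eq_mul, Nat.cast_ofNat]
    omega
  have hmod :=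
    twistedConj_inr_add_two_nsmul u (fun i => ((y i : ZMod 2).val : ℤ)) (fun i => y i / 2)
  rw [hy, ofAdd_toAdd] at hmod
  exact (Quot.sound hmod).trans (Quot.sound (twistedConj_inr_right u hu g)).symm

end Wreath

theorem stmt16_general (p : ℕ) (hp : p.Prime) (hp3 : 3 < p) (k : ℕ) :
    (∃ φ : Wreath p k ≃* Wreath p k, Finite (ReidemeisterClasses φ)) ∧
    ¬ (∀ φ : Wreath p k ≃* Wreath p k, Infinite (ReidemeisterClasses φ)) := by
  have coprime_of_lt {r : ℕ} (hr : r.Prime) (hrp : r < p) : r.Coprime p :=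
    (Nat.coprime_primes hr hp).2 hrp.ne
  let two : (ZMod p)ˣ := ZMod.unitOfCoprime 2 (coprime_of_lt Nat.prime_two (by omega))
  have hu : IsUnit ((two : ZMod p) ^ 2 - 1) := by
    convert (ZMod.isUnit_iff_coprime 3 p).2 (coprime_of_lt Nat.prime_three hp3)
    norm_num [two]
  have hfin := Wreath.finite_reidemeisterClasses_twistAut (k := k) two hu
  exact ⟨⟨_, hfin⟩, fun h => not_finite_iff_infinite.2 (h _) hfin⟩

/-- For a prime `p > 3`, the group `ℤ_p wr ℤ^k` has an automorphism with finite
Reidemeister number; consequently it does not have property `R_∞`. -/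
theorem stmt16 (p : ℕ) (hp : p.Prime) (hp3 : 3 < p) (k : ℕ) (hk : 1 ≤ k) :
    (∃ φ : Wreath p k ≃* Wreath p k, Finite (ReidemeisterClasses φ)) ∧
    ¬ (∀ φ : Wreath p k ≃* Wreath p k, Infinite (ReidemeisterClasses φ)) :=
  stmt16_general p hp hp3 k
end
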